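/- arXiv:2309.16453 — 2 statements merged into one kernel-verified Lean document; each statement's English description precedes it below -/
import Mathlib

section
/- Let X be a topological space, I = [0,1], and t_n = 1 − 2^{−(n−1)} for n ≥ 1. Suppose F : X × [0,1) → X is continuous, and suppose for each x₀ ∈ X and each neighborhood V of x₀ there exist k ∈ ℕ and a neighborhood W of x₀ such that F(W × [t_k, 1)) ⊆ V. Then the map H : X × [0,1] → X defined by H = F on X × [0,1) and H(x,1) = x is continuous. -/
open Filter Topology Set

/-!
At a point `(x, 1)` the neighbourhood filter of `X × (-∞, 1]` splits as
`𝓝 x ×ˢ 𝓝[<] 1 ⊔ 𝓝 x ×ˢ pure 1`. On the first piece `H = F`, and the tail hypothesis says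
precisely that `F` tends to `x` along it; on the second piece `H` is the identity of `X`.
Away from `t = 1`, `H` agrees with `F` on a relative neighbourhood, so it inherits continuity.
-/

theorem tendsto_prod_nhdsLT_of_forall_mem {X Y : Type*} [TopologicalSpace X] [TopologicalSpace Y]
    {g : X × ℝ → Y} {x : X} {b : ℝ} {y : Y}
    (h : ∀ V ∈ 𝓝 y, ∃ W ∈ 𝓝 x, ∃ a < b, ∀ x' ∈ W, ∀ t ∈ Ico a b, g (x', t) ∈ V) :
    Tendsto g (𝓝 x ×ˢ 𝓝[<] b) (𝓝 y) := fun V hV =>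
  let ⟨W, hW, _, ha, hg⟩ := h V hV
  mem_map.2 <| mem_of_superset (prod_mem_prod hW (Ico_mem_nhdsLT ha))
    fun p (hp : p ∈ W ×ˢ Ico _ b) => hg p.1 hp.1 p.2 hp.2

theorem continuousWithinAt_prod_Iic_of_tendsto {X Y : Type*} [TopologicalSpace X]
    [TopologicalSpace Y] {g : X × ℝ → Y} {x : X} {b : ℝ}
    (hlt : Tendsto g (𝓝 x ×ˢ 𝓝[<] b) (𝓝 (g (x, b))))
    (hb : ContinuousAt (fun x' => g (x', b)) x) :
    ContinuousWithinAt g (univ ×ˢ Iic b) (x, b) := by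
  rw [ContinuousWithinAt, nhdsWithin_prod_eq, nhdsWithin_univ, ← Iio_insert, nhdsWithin_insert,
    prod_sup, prod_pure, tendsto_sup, tendsto_map'_iff]
  exact ⟨hb, hlt⟩

/-- extending a map `F : X × [0,1) → X` by the identity at `t = 1`
gives a continuous map on `X × [0,1]`, provided tails of tracks shrink into
neighborhoods. -/
theorem stmt_10 {X : Type*} [TopologicalSpace X]
    (F : X → ℝ → X)
    (hFc : ContinuousOn (fun p : X × ℝ => F p.1 p.2)
      ((Set.univ : Set X) ×ˢ Set.Ico (0 : ℝ) 1))
    (htail : ∀ x₀ : X, ∀ V ∈ 𝓝 x₀, ∃ k : ℕ, 1 ≤ k ∧ ∃ W ∈ 𝓝 x₀,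
      ∀ x ∈ W, ∀ t ∈ Set.Ico (1 - (1 / 2 : ℝ) ^ (k - 1)) (1 : ℝ), F x t ∈ V)
    (H : X → ℝ → X)
    (hH1 : ∀ x : X, ∀ t ∈ Set.Ico (0 : ℝ) 1, H x t = F x t)
    (hH2 : ∀ x : X, H x 1 = x) :
    ContinuousOn (fun p : X × ℝ => H p.1 p.2)
      ((Set.univ : Set X) ×ˢ Set.Icc (0 : ℝ) 1) := by
  rintro ⟨x, t⟩ ⟨-, ht0, ht1⟩
  rcases ht1.lt_or_eq with ht | rfl
  · have hIco : univ ×ˢ Ico (0 : ℝ) 1 ∈ 𝓝[univ ×ˢ Icc 0 1] (x, t) := by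
      rw [nhdsWithin_prod_eq]
      exact prod_mem_prod univ_mem <| mem_of_superset
        (inter_mem_nhdsWithin _ (Iio_mem_nhds ht)) fun s hs => ⟨hs.1.1, hs.2⟩
    exact ((hFc (x, t) ⟨trivial, ht0, ht⟩).congr (fun p hp => hH1 p.1 p.2 hp.2)
      (hH1 x t ⟨ht0, ht⟩)).mono_of_mem_nhdsWithin hIco
  · have hF : Tendsto (fun p : X × ℝ => F p.1 p.2) (𝓝 x ×ˢ 𝓝[<] 1) (𝓝 x) :=
      tendsto_prod_nhdsLT_of_forall_mem fun V hV => by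
        obtain ⟨k, -, W, hW, hFW⟩ := htail x V hV
        exact ⟨W, hW, _, sub_lt_self 1 (by positivity), hFW⟩
    have hHF : (fun p : X × ℝ => F p.1 p.2) =ᶠ[𝓝 x ×ˢ 𝓝[<] 1] fun p => H p.1 p.2 :=
      mem_of_superset (prod_mem_prod univ_mem (Ico_mem_nhdsLT zero_lt_one))
        fun p hp => (hH1 p.1 p.2 hp.2).symm
    refine (continuousWithinAt_prod_Iic_of_tendsto ?_ ?_).mono
      (prod_mono subset_rfl Icc_subset_Iic_self)
    · simpa only [hH2] using hF.congr' hHF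
    · simpa only [hH2] using continuousAt_id' x
end

section
/- Let G be a group acting by homeomorphisms on spaces X and Y with X an equivariant absolute extensor (G-AE) for a class containing X × [0,1], and let A be a closed G-invariant subset of X. If A is a G-AE, then A is a strong G-deformation retract of X: there exists a continuous G-homotopy F : X × [0,1] → X with F(x,0) = x for all x ∈ X, F(a,t) = a for all a ∈ A and t ∈ [0,1], and F(X × {1}) ⊆ A. -/
/-!
Since `A` is a `G`-AE, the identity of `A` extends to a `G`-retraction `r : X → A`. The
deformation is then a `G`-extension, into the `G`-AE `X`, of the map on the closed invariant
set `X × {0} ∪ A × I ∪ X × {1}` of `X × I` that is the projection on `X × {0} ∪ A × I` and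
`r` on `X × {1}`; the two pieces agree on `A × {1}` because `r` fixes `A`.
-/

open unitInterval

universe u v

/-- A subset `s` of the `G`-space `Z` is an equivariant absolute extensor
(for the class of all `G`-spaces in the same universe): every `G`-map into `s`
defined on a closed invariant subset of a `G`-space extends to a global
`G`-map into `s`. -/
def IsGAE (G : Type v) [Group G] (Z : Type u) [TopologicalSpace Z] [MulAction G Z]
    (s : Set Z) : Prop :=
  ∀ (Y : Type u) [TopologicalSpace Y] [MulAction G Y],
    (∀ g : G, Continuous (fun y : Y => g • y)) →
    ∀ B : Set Y, IsClosed B → (∀ g : G, ∀ b ∈ B, g • b ∈ B) →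
    ∀ f : Y → Z, ContinuousOn f B → (∀ b ∈ B, f b ∈ s) →
    (∀ g : G, ∀ b ∈ B, f (g • b) = g • f b) →
    ∃ F : Y → Z, Continuous F ∧ (∀ y, F y ∈ s) ∧ (∀ b ∈ B, F b = f b) ∧
      (∀ g : G, ∀ y : Y, F (g • y) = g • F y)

open Set

abbrev MulAction.prodLeft (G X T : Type*) [Monoid G] [MulAction G X] : MulAction G (X × T) where
  smul g p := (g • p.1, p.2)
  one_smul p := Prod.ext (one_smul G p.1) rfl
  mul_smul g h p := Prod.ext (mul_smul g h p.1) rfl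

section

variable {G : Type v} {X : Type u} [Group G] [TopologicalSpace X] [MulAction G X]

theorem IsGAE.exists_extension_prod {s : Set X} (hs : IsGAE G X s)
    (hGX : ∀ g : G, Continuous (fun x : X => g • x)) {T : Type} [TopologicalSpace T]
    {B : Set (X × T)} (hB : IsClosed B) (hBinv : ∀ g : G, ∀ p ∈ B, (g • p.1, p.2) ∈ B)
    (f : X × T → X) (hf : ContinuousOn f B) (hfs : ∀ p ∈ B, f p ∈ s)
    (hfg : ∀ g : G, ∀ p ∈ B, f (g • p.1, p.2) = g • f p) :
    ∃ F : X × T → X, Continuous F ∧ (∀ p, F p ∈ s) ∧ (∀ p ∈ B, F p = f p) ∧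
      ∀ g : G, ∀ p, F (g • p.1, p.2) = g • F p :=
  letI := MulAction.prodLeft G X T
  hs (X × T) (fun g => ((hGX g).comp continuous_fst).prodMk continuous_snd) B hB hBinv f hf hfs
    hfg

theorem IsGAE.exists_retraction (hGX : ∀ g : G, Continuous (fun x : X => g • x)) {A : Set X}
    (hAcl : IsClosed A) (hAinv : ∀ g : G, ∀ a ∈ A, g • a ∈ A) (hA : IsGAE G X A) :
    ∃ r : X → X, Continuous r ∧ (∀ x, r x ∈ A) ∧ (∀ a ∈ A, r a = a) ∧
      ∀ g : G, ∀ x, r (g • x) = g • r x :=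
  hA X hGX A hAcl hAinv id continuousOn_id (fun _ ha => ha) (fun _ _ _ => rfl)

theorem IsGAE.exists_strong_deformation_of_retraction (hX : IsGAE G X univ)
    (hGX : ∀ g : G, Continuous (fun x : X => g • x)) {A : Set X} (hAcl : IsClosed A)
    (hAinv : ∀ g : G, ∀ a ∈ A, g • a ∈ A) (r : X → X) (hr : Continuous r)
    (hrA : ∀ x, r x ∈ A) (hr_eq : ∀ a ∈ A, r a = a) (hrg : ∀ g : G, ∀ x, r (g • x) = g • r x) :
    ∃ F : X → I → X,
      Continuous (fun p : X × I => F p.1 p.2) ∧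
      (∀ x : X, F x 0 = x) ∧
      (∀ a ∈ A, ∀ t : I, F a t = a) ∧
      (∀ x : X, F x 1 ∈ A) ∧
      (∀ g : G, ∀ x : X, ∀ t : I, F (g • x) t = g • F x t) := by
  let B₀ : Set (X × I) := univ ×ˢ {0} ∪ A ×ˢ univ
  let B₁ : Set (X × I) := univ ×ˢ {1}
  let f : X × I → X := fun p => if p.2 = 1 then r p.1 else p.1
  have hB₀ : IsClosed B₀ := (isClosed_univ.prod isClosed_singleton).union (hAcl.prod isClosed_univ)
  have hB₁ : IsClosed B₁ := isClosed_univ.prod isClosed_singleton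
  have hf₀ : EqOn f Prod.fst B₀ := by
    rintro ⟨x, t⟩ (⟨-, rfl : t = 0⟩ | ⟨hx, -⟩)
    · simp [f]
    · by_cases ht : t = 1 <;> simp [f, ht, hr_eq x hx]
  have hf₁ : EqOn f (r ∘ Prod.fst) B₁ := by
    rintro ⟨x, t⟩ ⟨-, rfl : t = 1⟩
    simp [f]
  have hBinv : ∀ g : G, ∀ p ∈ B₀ ∪ B₁, (g • p.1, p.2) ∈ B₀ ∪ B₁ := by
    rintro g ⟨x, t⟩ ((⟨-, ht⟩ | ⟨hx, -⟩) | ⟨-, ht⟩)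
    · exact .inl (.inl ⟨mem_univ _, ht⟩)
    · exact .inl (.inr ⟨hAinv g x hx, mem_univ _⟩)
    · exact .inr ⟨mem_univ _, ht⟩
  have hf : ContinuousOn f (B₀ ∪ B₁) :=
    (continuous_fst.continuousOn.congr hf₀).union_of_isClosed
      ((hr.comp continuous_fst).continuousOn.congr hf₁) hB₀ hB₁
  obtain ⟨F, hF, -, hFf, hFg⟩ := hX.exists_extension_prod hGX (hB₀.union hB₁) hBinv f hf
    (fun _ _ => mem_univ _) (fun g p _ => by by_cases h : p.2 = 1 <;> simp [f, h, hrg])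
  refine ⟨fun x t => F (x, t), hF, fun x => ?_, fun a ha t => ?_, fun x => ?_,
    fun g x t => hFg g (x, t)⟩
  · have hx : (x, (0 : I)) ∈ B₀ := .inl ⟨mem_univ x, rfl⟩
    exact (hFf _ (.inl hx)).trans (hf₀ hx)
  · have ha : (a, t) ∈ B₀ := .inr ⟨ha, mem_univ t⟩
    exact (hFf _ (.inl ha)).trans (hf₀ ha)
  · have hx : (x, (1 : I)) ∈ B₁ := ⟨mem_univ x, rfl⟩
    simpa only [hFf _ (.inr hx), hf₁ hx, Function.comp_apply] using hrA x

end

/-- a closed invariant subset which is a `G`-AE is a strong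
`G`-deformation retract of a `G`-AE space. -/
theorem stmt_13 {G : Type v} {X : Type u} [Group G] [MulAction G X] [TopologicalSpace X]
    (hGX : ∀ g : G, Continuous (fun x : X => g • x))
    (hX : IsGAE G X (Set.univ : Set X))
    (A : Set X) (hAcl : IsClosed A) (hAinv : ∀ g : G, ∀ a ∈ A, g • a ∈ A)
    (hA : IsGAE G X A) :
    ∃ F : X → unitInterval → X,
      Continuous (fun p : X × unitInterval => F p.1 p.2) ∧
      (∀ x : X, F x 0 = x) ∧
      (∀ a ∈ A, ∀ t : unitInterval, F a t = a) ∧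
      (∀ x : X, F x 1 ∈ A) ∧
      (∀ g : G, ∀ x : X, ∀ t : unitInterval, F (g • x) t = g • F x t) := by
  obtain ⟨r, hr, hrA, hr_eq, hrg⟩ := IsGAE.exists_retraction hGX hAcl hAinv hA
  exact hX.exists_strong_deformation_of_retraction hGX hAcl hAinv r hr hrA hr_eq hrg
end
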